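/- The map μ: ℂ² → su(2) given by μ(z₁,z₂) = φ'(|z₁|²+|z₂|²) · [[(|z₁|²-|z₂|²)/2, z̄₁z₂],[z₁z̄₂, -(|z₁|²-|z₂|²)/2]] (identified with i·su(2) via the standard pairing), where φ: ℝ^{>0} → ℝ is smooth with t ↦ φ(e^{2t}) strictly increasing and strictly convex, is never proper on ℂ²∖{0}. In particular there is no choice of φ for which lim_{t→0⁺} φ'(t)·t = ∞. -/

import Mathlib

/-!
Put `g t = φ (exp (2 t))`, so that `g' t = 2 s φ'(s)` with `s = exp (2 t)`. Since `g` is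
monotone its derivative is nonnegative, and since `g` is convex its derivative is monotone;
hence `0 ≤ 2 s φ'(s) ≤ g' 0` for `0 < s ≤ 1`. On the punctured complex line `z = (r, 0)` the
moment map is `(r² φ'(r²) / 2) · diag(1, -1)`, so as `r → 0⁺` it stays in a compact set while
`z` leaves every compact subset of `ℂ² ∖ {0}`.
-/

open Set Filter Topology

theorem ConvexOn.hasDerivAt_mem_Icc_of_monotone {g g' : ℝ → ℝ} (hconv : ConvexOn ℝ univ g)
    (hmono : Monotone g) (hg : ∀ t, HasDerivAt g (g' t) t) {t a : ℝ} (hta : t ≤ a) :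
    g' t ∈ Icc 0 (g' a) := by
  rw [← (hg t).deriv, ← (hg a).deriv]
  exact ⟨hmono.deriv_nonneg,
    hconv.monotoneOn_deriv (fun x _ => (hg x).differentiableAt) trivial trivial hta⟩

theorem hasDerivAt_comp_exp_two_mul {φ φ' : ℝ → ℝ} (hderiv : ∀ s > 0, HasDerivAt φ (φ' s) s)
    (t : ℝ) :
    HasDerivAt (fun t => φ (Real.exp (2 * t)))
      (2 * (φ' (Real.exp (2 * t)) * Real.exp (2 * t))) t := by
  have hexp : HasDerivAt (fun t => Real.exp (2 * t)) (Real.exp (2 * t) * 2) t := by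
    simpa using ((hasDerivAt_id t).const_mul 2).exp
  rw [show 2 * (φ' (Real.exp (2 * t)) * Real.exp (2 * t))
      = φ' (Real.exp (2 * t)) * (Real.exp (2 * t) * 2) by ring]
  exact (hderiv (Real.exp (2 * t)) (Real.exp_pos _)).comp t hexp

theorem exists_mapsTo_Ioc_Icc_of_convexOn_comp_exp {φ φ' : ℝ → ℝ}
    (hderiv : ∀ s > 0, HasDerivAt φ (φ' s) s)
    (hmono : Monotone fun t : ℝ => φ (Real.exp (2 * t)))
    (hconv : ConvexOn ℝ univ fun t : ℝ => φ (Real.exp (2 * t))) :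
    ∃ C, MapsTo (fun s => φ' s * s) (Ioc 0 1) (Icc 0 C) := by
  refine ⟨φ' 1, fun s ⟨hs0, hs1⟩ => ?_⟩
  have hlog : Real.log s / 2 ≤ 0 := by linarith [Real.log_nonpos hs0.le hs1]
  have hbound := hconv.hasDerivAt_mem_Icc_of_monotone hmono
    (hasDerivAt_comp_exp_two_mul hderiv) hlog
  rw [mul_div_cancel₀ _ two_ne_zero, Real.exp_log hs0, mul_zero, Real.exp_zero, mul_one] at hbound
  exact ⟨by linarith [hbound.1], by linarith [hbound.2]⟩

theorem not_isProperMap_of_tendsto_notMem {ι X Y : Type*} [TopologicalSpace X] [T2Space X]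
    [TopologicalSpace Y] {s : Set X} {f : s → Y} {l : Filter ι} [l.NeBot] {u : ι → s} {x : X}
    (hx : x ∉ s) (hu : Tendsto (fun i => (u i : X)) l (𝓝 x)) {K : Set Y} (hK : IsCompact K)
    (hfu : ∀ i, f (u i) ∈ K) : ¬ IsProperMap f := by
  intro hf
  have hclosed : IsClosed (((↑) : s → X) '' (f ⁻¹' K)) :=
    ((hf.isCompact_preimage hK).image continuous_subtype_val).isClosed
  obtain ⟨y, -, rfl⟩ :=
    hclosed.mem_of_tendsto hu (Eventually.of_forall fun i => ⟨u i, hfu i, rfl⟩)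
  exact hx y.2

/-- The `SU(2)`-moment map on `ℂ² ∖ {0}` associated to an invariant Kähler potential
`φ(‖z‖²)` (so that `t ↦ φ(e^{2t})` is strictly increasing and strictly convex) is never a
proper map; in particular there is no choice of `φ` with `lim_{t→0⁺} φ'(t)·t = ∞`. -/
theorem stmt_2 (φ φ' : ℝ → ℝ)
    (hderiv : ∀ t > 0, HasDerivAt φ (φ' t) t)
    (hmono : StrictMono fun t : ℝ => φ (Real.exp (2 * t)))
    (hconv : StrictConvexOn ℝ Set.univ fun t : ℝ => φ (Real.exp (2 * t)))
    (μ : {p : ℂ × ℂ // p ≠ 0} → Matrix (Fin 2) (Fin 2) ℂ)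
    (hμ : ∀ z : {p : ℂ × ℂ // p ≠ 0},
      μ z = φ' (‖z.1.1‖ ^ 2 + ‖z.1.2‖ ^ 2) •
        !![(((‖z.1.1‖ ^ 2 - ‖z.1.2‖ ^ 2) / 2 : ℝ) : ℂ),
              (starRingEnd ℂ) z.1.1 * z.1.2;
            z.1.1 * (starRingEnd ℂ) z.1.2,
              -(((‖z.1.1‖ ^ 2 - ‖z.1.2‖ ^ 2) / 2 : ℝ) : ℂ)]) :
    ¬ IsProperMap μ ∧
      ¬ Filter.Tendsto (fun t : ℝ => φ' t * t) (nhdsWithin 0 (Set.Ioi 0)) Filter.atTop := by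
  obtain ⟨C, hC⟩ :=
    exists_mapsTo_Ioc_Icc_of_convexOn_comp_exp hderiv hmono.monotone hconv.convexOn
  refine ⟨fun hproper => ?_, fun htendsto => ?_⟩
  · have hμ_axis : ∀ (r : ℝ) (hr : ((r : ℂ), (0 : ℂ)) ≠ 0),
        μ ⟨_, hr⟩ = ((φ' (r ^ 2) * r ^ 2 / 2 : ℝ) : ℂ) • !![(1 : ℂ), 0; 0, -1] := by
      intro r hr
      rw [hμ]
      ext i j
      fin_cases i <;> fin_cases j <;> simp [Complex.real_smul] <;> ring
    let r : ℕ → ℝ := fun n => 1 / (n + 1)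
    have hr : ∀ n, r n ^ 2 ∈ Ioc 0 1 := fun n =>
      ⟨by positivity, pow_le_one₀ (by positivity) (div_le_one_of_le₀ (by simp) (by positivity))⟩
    let u : ℕ → {p : ℂ × ℂ // p ≠ 0} := fun n =>
      ⟨((r n : ℂ), 0), by simp [r, Nat.cast_add_one_ne_zero]⟩
    have hu : Tendsto (fun n => (u n : ℂ × ℂ)) atTop (𝓝 0) :=
      ((Complex.continuous_ofReal.tendsto 0).comp
        tendsto_one_div_add_atTop_nhds_zero_nat).prodMk_nhds tendsto_const_nhds
    have hK : IsCompact ((fun c : ℝ => ((c / 2 : ℝ) : ℂ) • !![(1 : ℂ), 0; 0, -1]) '' Icc 0 C) :=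
      isCompact_Icc.image (by fun_prop)
    exact not_isProperMap_of_tendsto_notMem (not_not_intro rfl) hu hK
      (fun n => ⟨_, hC (hr n), (hμ_axis _ _).symm⟩) hproper
  · exact not_isBoundedUnder_of_tendsto_atTop htendsto
      ⟨C, eventually_map.2 <| eventually_of_mem (Ioc_mem_nhdsGT zero_lt_one) fun s hs => (hC hs).2⟩
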